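/- arXiv:1209.3814 — 4 statements merged into one kernel-verified Lean document; each statement's English description precedes it below -/
import Mathlib

section
/- Let n ≥ 2 be a natural number, σ > 0, m ≥ 1 a natural number, V > 0 a real number, and let ω_n denote the Lebesgue volume of the unit ball in ℝⁿ. Let ψ₁, ψ₂ : ℝ → ℝ be differentiable on a neighborhood of θ_* > 0 with ψ₁′, ψ₂′ differentiable at θ_*, and assume j(θ) := ψ₂(θ) − ψ₁(θ) > 0 on that neighborhood. Define R(θ) := (n−1)σ/j(θ), V₁(θ) := m·ω_n·R(θ)ⁿ, |Γ|(θ) := m·n·ω_n·R(θ)^{n−1}, and the equilibrium energy φ(θ) := ε₁(θ)·V₁(θ) + ε₂(θ)·(V − V₁(θ)) + σ·|Γ|(θ). Then φ is differentiable at θ_* with φ′(θ_*) = κ₁(θ_*)·V₁(θ_*) + κ₂(θ_*)·(V − V₁(θ_*)) − l(θ_*)²·|Γ|(θ_*)·R(θ_*)²/(θ_*·(n−1)·σ). -/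
open MeasureTheory

/-!
Differentiate `φ` term by term. Since `ψ - θψ'` has derivative `-θψ''`, the bulk energies give
the heat-capacity terms. The Young–Laplace relation `[[ψ]] R = (n - 1) σ` turns the derivative of
the surface energy `σ |Γ|` into `[[ψ]] V₁'`, where `V₁' = |Γ| R'`; what remains is
`([[ψ]] - [[ε]]) V₁' = l V₁'`, and `R' = -R² [[ψ]]' / ((n - 1) σ)` yields the latent-heat term.
-/

theorem HasDerivAt.sub_id_mul {f f' : ℝ → ℝ} {f'' x : ℝ}
    (hf : HasDerivAt f (f' x) x) (hf' : HasDerivAt f' f'' x) :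
    HasDerivAt (fun t => f t - t * f' t) (-x * f'') x :=
  (hf.fun_sub ((hasDerivAt_id' x).fun_mul hf')).congr_deriv (by ring)

theorem hasDerivAt_surface_energy_of_youngLaplace {R : ℝ → ℝ} {R' x c σ p : ℝ} {n : ℕ}
    (hn : 2 ≤ n) (hR : HasDerivAt R R' x) (hYL : p * R x = (n - 1) * σ) :
    HasDerivAt (fun t => σ * (c * R t ^ (n - 1))) (p * (c * R x ^ (n - 1) * R')) x := by
  obtain ⟨k, rfl⟩ : ∃ k, n = k + 2 := ⟨n - 2, by omega⟩
  refine (((hR.fun_pow (k + 1)).const_mul c).const_mul σ).congr_deriv ?_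
  push_cast at hYL ⊢
  linear_combination -(c * R x ^ k * R') * hYL

theorem equilibrium_energy_derivative_general
    (n : ℕ) (hn : 2 ≤ n) (σ : ℝ)
    (m : ℕ) (V : ℝ)
    (θstar : ℝ)
    (ψ₁ ψ₂ ψ₁' ψ₂' : ℝ → ℝ)
    (U : Set ℝ) (hU : U ∈ nhds θstar)
    (hψ₁ : ∀ θ ∈ U, HasDerivAt ψ₁ (ψ₁' θ) θ)
    (hψ₂ : ∀ θ ∈ U, HasDerivAt ψ₂ (ψ₂' θ) θ)
    (ψ₁'' ψ₂'' : ℝ)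
    (hψ₁'' : HasDerivAt ψ₁' ψ₁'' θstar)
    (hψ₂'' : HasDerivAt ψ₂' ψ₂'' θstar)
    (hj : ∀ θ ∈ U, 0 < ψ₂ θ - ψ₁ θ)
    (ωn : ℝ)
    (R V₁ Γ ε₁ ε₂ φ : ℝ → ℝ)
    (hR : ∀ θ, R θ = (n - 1 : ℝ) * σ / (ψ₂ θ - ψ₁ θ))
    (hV₁ : ∀ θ, V₁ θ = m * ωn * (R θ) ^ n)
    (hΓ : ∀ θ, Γ θ = m * n * ωn * (R θ) ^ (n - 1))
    (hε₁ : ∀ θ, ε₁ θ = ψ₁ θ - θ * ψ₁' θ)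
    (hε₂ : ∀ θ, ε₂ θ = ψ₂ θ - θ * ψ₂' θ)
    (hφ : ∀ θ, φ θ = ε₁ θ * V₁ θ + ε₂ θ * (V - V₁ θ) + σ * Γ θ)
    (κ₁ κ₂ l : ℝ)
    (hκ₁ : κ₁ = -θstar * ψ₁'') (hκ₂ : κ₂ = -θstar * ψ₂'')
    (hl : l = θstar * (ψ₂' θstar - ψ₁' θstar)) :
    HasDerivAt φ
      (κ₁ * V₁ θstar + κ₂ * (V - V₁ θstar)
        - l ^ 2 * Γ θstar * (R θstar) ^ 2 / (θstar * (n - 1 : ℝ) * σ)) θstar := by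
  have hθU : θstar ∈ U := mem_of_mem_nhds hU
  set j := ψ₂ θstar - ψ₁ θstar
  set j' := ψ₂' θstar - ψ₁' θstar
  have hjne : j ≠ 0 := (hj θstar hθU).ne'
  have hRd : HasDerivAt R (-((n - 1) * σ * j') / j ^ 2) θstar := by
    rw [funext hR]
    exact ((hasDerivAt_const _ _).fun_div ((hψ₂ θstar hθU).fun_sub (hψ₁ θstar hθU))
      hjne).congr_deriv (by ring)
  set R' := -((n - 1) * σ * j') / j ^ 2
  have hV₁d : HasDerivAt V₁ (Γ θstar * R') θstar := by
    rw [funext hV₁, hΓ]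
    exact ((hRd.fun_pow n).const_mul _).congr_deriv (by ring)
  have hΓd : HasDerivAt (fun θ => σ * Γ θ) (j * (Γ θstar * R')) θstar := by
    simp only [hΓ]
    refine hasDerivAt_surface_energy_of_youngLaplace hn hRd ?_
    rw [hR]
    exact mul_div_cancel₀ _ hjne
  have hε₁d : HasDerivAt ε₁ κ₁ θstar := by
    rw [funext hε₁, hκ₁]
    exact (hψ₁ θstar hθU).sub_id_mul hψ₁''
  have hε₂d : HasDerivAt ε₂ κ₂ θstar := by
    rw [funext hε₂, hκ₂]
    exact (hψ₂ θstar hθU).sub_id_mul hψ₂''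
  rw [funext hφ]
  refine (((hε₁d.fun_mul hV₁d).fun_add
    (hε₂d.fun_mul ((hasDerivAt_const _ V).fun_sub hV₁d))).fun_add hΓd).congr_deriv ?_
  rw [hl, hε₁, hε₂, hR]
  field_simp
  ring

/-- Derivative of the equilibrium energy `φ` at the equilibrium temperature `θ_*`:
`φ′(θ_*) = κ₁(θ_*)·V₁(θ_*) + κ₂(θ_*)·(V − V₁(θ_*)) − l(θ_*)²·|Γ_*|·R_*²/(θ_*(n−1)σ)`. -/
theorem equilibrium_energy_derivative
    (n : ℕ) (hn : 2 ≤ n) (σ : ℝ) (hσ : 0 < σ)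
    (m : ℕ) (hm : 1 ≤ m) (V : ℝ) (hV : 0 < V)
    (θstar : ℝ) (hθ : 0 < θstar)
    (ψ₁ ψ₂ ψ₁' ψ₂' : ℝ → ℝ)
    (U : Set ℝ) (hU : U ∈ nhds θstar)
    (hψ₁ : ∀ θ ∈ U, HasDerivAt ψ₁ (ψ₁' θ) θ)
    (hψ₂ : ∀ θ ∈ U, HasDerivAt ψ₂ (ψ₂' θ) θ)
    (ψ₁'' ψ₂'' : ℝ)
    (hψ₁'' : HasDerivAt ψ₁' ψ₁'' θstar)
    (hψ₂'' : HasDerivAt ψ₂' ψ₂'' θstar)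
    (hj : ∀ θ ∈ U, 0 < ψ₂ θ - ψ₁ θ)
    (ωn : ℝ)
    (hωn : ωn = (volume (Metric.ball (0 : EuclideanSpace ℝ (Fin n)) 1)).toReal)
    (R V₁ Γ ε₁ ε₂ φ : ℝ → ℝ)
    (hR : ∀ θ, R θ = (n - 1 : ℝ) * σ / (ψ₂ θ - ψ₁ θ))
    (hV₁ : ∀ θ, V₁ θ = m * ωn * (R θ) ^ n)
    (hΓ : ∀ θ, Γ θ = m * n * ωn * (R θ) ^ (n - 1))
    (hε₁ : ∀ θ, ε₁ θ = ψ₁ θ - θ * ψ₁' θ)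
    (hε₂ : ∀ θ, ε₂ θ = ψ₂ θ - θ * ψ₂' θ)
    (hφ : ∀ θ, φ θ = ε₁ θ * V₁ θ + ε₂ θ * (V - V₁ θ) + σ * Γ θ)
    (κ₁ κ₂ l : ℝ)
    (hκ₁ : κ₁ = -θstar * ψ₁'') (hκ₂ : κ₂ = -θstar * ψ₂'')
    (hl : l = θstar * (ψ₂' θstar - ψ₁' θstar)) :
    HasDerivAt φ
      (κ₁ * V₁ θstar + κ₂ * (V - V₁ θstar)
        - l ^ 2 * Γ θstar * (R θstar) ^ 2 / (θstar * (n - 1 : ℝ) * σ)) θstar :=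
  equilibrium_energy_derivative_general n hn σ m V θstar ψ₁ ψ₂ ψ₁' ψ₂' U hU hψ₁ hψ₂ ψ₁'' ψ₂'' hψ₁''
    hψ₂'' hj ωn R V₁ Γ ε₁ ε₂ φ hR hV₁ hΓ hε₁ hε₂ hφ κ₁ κ₂ l hκ₁ hκ₂ hl
end

section
/- Let n ≥ 2 be a natural number, σ > 0, m ≥ 1 a natural number, V > 0 a real number, and let ω_n denote the Lebesgue volume of the unit ball in ℝⁿ. Let ψ₁, ψ₂ : ℝ → ℝ be differentiable on a neighborhood of θ_* > 0 with ψ₁′, ψ₂′ differentiable at θ_*, and assume j(θ) := ψ₂(θ) − ψ₁(θ) > 0 on that neighborhood. Define R(θ) := (n−1)σ/j(θ), V₁(θ) := m·ω_n·R(θ)ⁿ, |Γ|(θ) := m·n·ω_n·R(θ)^{n−1}, and φ(θ) := ε₁(θ)·V₁(θ) + ε₂(θ)·(V − V₁(θ)) + σ·|Γ|(θ). Assume moreover κ₁(θ_*) > 0, κ₂(θ_*) > 0, and 0 < V₁(θ_*) < V, and set R_* := R(θ_*), |Γ_*| := |Γ|(θ_*), l_* := l(θ_*), and K := κ₁(θ_*)·V₁(θ_*)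 + κ₂(θ_*)·(V − V₁(θ_*)). Then φ′(θ_*) ≤ 0 if and only if the stability condition (S) holds, i.e. if and only if σ(n−1)/R_*² − l_*²·|Γ_*|/(θ_*·K) ≤ 0. -/
open MeasureTheory

/-!
Since `εᵢ′ = κᵢ`, the bulk part of `φ′(θ_*)` is `K`. For the interface, `V₁′ = |Γ| R′` and
`|Γ|′ = (n − 1) |Γ| R′ / R`, and the Gibbs–Thomson relation `[[ψ]] = (n − 1) σ / R` makes the
jump of internal energy and the surface tension term combine to `l |Γ| R′`. Differentiating
`R = (n − 1) σ / [[ψ]]` gives `R′ = -R² l / (θ_* (n − 1) σ)`, hence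
`φ′(θ_*) = K − l² |Γ| R² / (θ_* (n − 1) σ)`, and clearing the positive denominators turns
`φ′(θ_*) ≤ 0` into (S).
-/

theorem hasDerivAt_internalEnergy {ψ ψ' : ℝ → ℝ} {ψ'' θ : ℝ}
    (hψ : HasDerivAt ψ (ψ' θ) θ) (hψ' : HasDerivAt ψ' ψ'' θ) :
    HasDerivAt (fun t => ψ t - t * ψ' t) (-θ * ψ'') θ :=
  (hψ.fun_sub ((hasDerivAt_id θ).fun_mul hψ')).congr_deriv (by simp)

theorem HasDerivAt.const_div {j : ℝ → ℝ} {j' θ : ℝ} (c : ℝ) (hj : HasDerivAt j j' θ)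
    (hjθ : j θ ≠ 0) :
    HasDerivAt (fun t => c / j t) (-((c / j θ) ^ 2 * j' / c)) θ :=
  ((hasDerivAt_const θ c).div hj hjθ).congr_deriv (by field_simp; ring)

theorem HasDerivAt.fun_pow_of_ne_zero {f : ℝ → ℝ} {f' x : ℝ} (hf : HasDerivAt f f' x)
    (hx : f x ≠ 0) (n : ℕ) :
    HasDerivAt (fun t => f t ^ n) (n * f x ^ n * f' / f x) x := by
  cases n with
  | zero => simpa using hasDerivAt_const x (1 : ℝ)
  | succ k =>
    refine (hf.fun_pow (k + 1)).congr_deriv ?_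
    field_simp
    simp only [add_tsub_cancel_right, pow_succ]
    ring

theorem hasDerivAt_totalEnergy {ε₁ ε₂ V₁ Γ : ℝ → ℝ} {κ₁ κ₂ V₁' Γ' θ : ℝ} (V σ : ℝ)
    (hε₁ : HasDerivAt ε₁ κ₁ θ) (hε₂ : HasDerivAt ε₂ κ₂ θ)
    (hV₁ : HasDerivAt V₁ V₁' θ) (hΓ : HasDerivAt Γ Γ' θ) :
    HasDerivAt (fun t => ε₁ t * V₁ t + ε₂ t * (V - V₁ t) + σ * Γ t)
      (κ₁ * V₁ θ + κ₂ * (V - V₁ θ) + (ε₁ θ - ε₂ θ) * V₁' + σ * Γ') θ :=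
  ((hε₁.fun_mul hV₁).fun_add (hε₂.fun_mul (hV₁.const_sub V))).fun_add (hΓ.const_mul σ)
    |>.congr_deriv (by ring)

theorem internalEnergy_jump_add_capillary_eq_latentHeat {ψ₁ ψ₂ ψ₁' ψ₂' θ σ R ν : ℝ}
    (hGibbsThomson : ψ₂ - ψ₁ = ν * σ / R) (X : ℝ) :
    (ψ₁ - θ * ψ₁' - (ψ₂ - θ * ψ₂')) * X + σ * (ν * X / R) = θ * (ψ₂' - ψ₁') * X := by
  linear_combination (-X) * hGibbsThomson

theorem sub_div_nonpos_iff_div_sub_div_nonpos {K θ c R x : ℝ} (hK : 0 < K) (hθ : 0 < θ)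
    (hc : 0 < c) (hR : R ≠ 0) :
    K - x * R ^ 2 / (θ * c) ≤ 0 ↔ c / R ^ 2 - x / (θ * K) ≤ 0 := by
  rw [sub_nonpos, sub_nonpos, le_div_iff₀ (by positivity),
    div_le_div_iff₀ (by positivity) (by positivity)]
  constructor <;> intro h <;> linarith

theorem stability_condition_iff_energy_derivative_nonpos_general
    (n : ℕ) (hn : 2 ≤ n) (σ : ℝ) (hσ : 0 < σ)
    (m : ℕ) (V : ℝ)
    (θstar : ℝ) (hθ : 0 < θstar)
    (ψ₁ ψ₂ ψ₁' ψ₂' : ℝ → ℝ)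
    (U : Set ℝ) (hU : U ∈ nhds θstar)
    (hψ₁ : ∀ θ ∈ U, HasDerivAt ψ₁ (ψ₁' θ) θ)
    (hψ₂ : ∀ θ ∈ U, HasDerivAt ψ₂ (ψ₂' θ) θ)
    (ψ₁'' ψ₂'' : ℝ)
    (hψ₁'' : HasDerivAt ψ₁' ψ₁'' θstar)
    (hψ₂'' : HasDerivAt ψ₂' ψ₂'' θstar)
    (hj : ∀ θ ∈ U, 0 < ψ₂ θ - ψ₁ θ)
    (ωn : ℝ)
    (R V₁ Γ ε₁ ε₂ φ : ℝ → ℝ)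
    (hR : ∀ θ, R θ = (n - 1 : ℝ) * σ / (ψ₂ θ - ψ₁ θ))
    (hV₁ : ∀ θ, V₁ θ = m * ωn * (R θ) ^ n)
    (hΓ : ∀ θ, Γ θ = m * n * ωn * (R θ) ^ (n - 1))
    (hε₁ : ∀ θ, ε₁ θ = ψ₁ θ - θ * ψ₁' θ)
    (hε₂ : ∀ θ, ε₂ θ = ψ₂ θ - θ * ψ₂' θ)
    (hφ : ∀ θ, φ θ = ε₁ θ * V₁ θ + ε₂ θ * (V - V₁ θ) + σ * Γ θ)
    (κ₁ κ₂ l : ℝ)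
    (hκ₁ : κ₁ = -θstar * ψ₁'') (hκ₂ : κ₂ = -θstar * ψ₂'')
    (hl : l = θstar * (ψ₂' θstar - ψ₁' θstar))
    (hκ₁pos : 0 < κ₁) (hκ₂pos : 0 < κ₂)
    (hV₁pos : 0 < V₁ θstar) (hV₁lt : V₁ θstar < V)
    (K : ℝ) (hK : K = κ₁ * V₁ θstar + κ₂ * (V - V₁ θstar)) :
    deriv φ θstar ≤ 0 ↔
      σ * (n - 1 : ℝ) / (R θstar) ^ 2 - l ^ 2 * Γ θstar / (θstar * K) ≤ 0 := by
  have hθU : θstar ∈ U := mem_of_mem_nhds hU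
  set c : ℝ := (n - 1 : ℝ) * σ
  have hc : 0 < c := mul_pos (by linarith [show (2 : ℝ) ≤ n by exact_mod_cast hn]) hσ
  have hRpos : 0 < R θstar := by rw [hR]; exact div_pos hc (hj _ hθU)
  have hGibbsThomson : ψ₂ θstar - ψ₁ θstar = c / R θstar := by
    rw [hR, div_div_cancel₀ hc.ne']
  set R' := -(R θstar ^ 2 * (ψ₂' θstar - ψ₁' θstar) / c)
  have hR' : HasDerivAt R R' θstar := by
    simp only [R']
    rw [funext hR]
    exact ((hψ₂ _ hθU).fun_sub (hψ₁ _ hθU)).const_div _ (hj _ hθU).ne'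
  have hV₁' : HasDerivAt V₁ (Γ θstar * R') θstar := by
    rw [hΓ, funext hV₁]
    exact ((hR'.fun_pow n).const_mul _).congr_deriv (by ring)
  have hΓ' : HasDerivAt Γ ((n - 1) * Γ θstar * R' / R θstar) θstar := by
    rw [hΓ, funext hΓ]
    refine ((hR'.fun_pow_of_ne_zero hRpos.ne' (n - 1)).const_mul _).congr_deriv ?_
    rw [Nat.cast_sub (by omega)]; ring
  have hε₁' : HasDerivAt ε₁ κ₁ θstar := by
    rw [hκ₁, funext hε₁]; exact hasDerivAt_internalEnergy (hψ₁ _ hθU) hψ₁''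
  have hε₂' : HasDerivAt ε₂ κ₂ θstar := by
    rw [hκ₂, funext hε₂]; exact hasDerivAt_internalEnergy (hψ₂ _ hθU) hψ₂''
  have hφ' : HasDerivAt φ
      (K - l ^ 2 * Γ θstar * R θstar ^ 2 / (θstar * c)) θstar := by
    rw [funext hφ]
    refine (hasDerivAt_totalEnergy V σ hε₁' hε₂' hV₁' hΓ').congr_deriv ?_
    have hlatent : l * (Γ θstar * R') =
        -(l ^ 2 * Γ θstar * R θstar ^ 2 / (θstar * c)) := by
      simp only [R', hl]; field_simp
    rw [hε₁, hε₂, hK]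
    linear_combination hlatent - Γ θstar * R' * hl +
      internalEnergy_jump_add_capillary_eq_latentHeat (θ := θstar) (ψ₁' := ψ₁' θstar)
        (ψ₂' := ψ₂' θstar) hGibbsThomson (Γ θstar * R')
  have hKpos : 0 < K := by
    rw [hK]; exact add_pos (mul_pos hκ₁pos hV₁pos) (mul_pos hκ₂pos (sub_pos.2 hV₁lt))
  rw [hφ'.deriv, mul_comm σ]
  exact sub_div_nonpos_iff_div_sub_div_nonpos hKpos hθ hc hRpos.ne'

/-- Part (ii) of the linear stability theorem: `φ′(θ_*) ≤ 0` iff the stability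
condition (S) holds, i.e. `σ(n−1)/R_*² − l_*²|Γ_*|/(θ_*·K) ≤ 0`. -/
theorem stability_condition_iff_energy_derivative_nonpos
    (n : ℕ) (hn : 2 ≤ n) (σ : ℝ) (hσ : 0 < σ)
    (m : ℕ) (hm : 1 ≤ m) (V : ℝ) (hV : 0 < V)
    (θstar : ℝ) (hθ : 0 < θstar)
    (ψ₁ ψ₂ ψ₁' ψ₂' : ℝ → ℝ)
    (U : Set ℝ) (hU : U ∈ nhds θstar)
    (hψ₁ : ∀ θ ∈ U, HasDerivAt ψ₁ (ψ₁' θ) θ)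
    (hψ₂ : ∀ θ ∈ U, HasDerivAt ψ₂ (ψ₂' θ) θ)
    (ψ₁'' ψ₂'' : ℝ)
    (hψ₁'' : HasDerivAt ψ₁' ψ₁'' θstar)
    (hψ₂'' : HasDerivAt ψ₂' ψ₂'' θstar)
    (hj : ∀ θ ∈ U, 0 < ψ₂ θ - ψ₁ θ)
    (ωn : ℝ)
    (hωn : ωn = (volume (Metric.ball (0 : EuclideanSpace ℝ (Fin n)) 1)).toReal)
    (R V₁ Γ ε₁ ε₂ φ : ℝ → ℝ)
    (hR : ∀ θ, R θ = (n - 1 : ℝ) * σ / (ψ₂ θ - ψ₁ θ))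
    (hV₁ : ∀ θ, V₁ θ = m * ωn * (R θ) ^ n)
    (hΓ : ∀ θ, Γ θ = m * n * ωn * (R θ) ^ (n - 1))
    (hε₁ : ∀ θ, ε₁ θ = ψ₁ θ - θ * ψ₁' θ)
    (hε₂ : ∀ θ, ε₂ θ = ψ₂ θ - θ * ψ₂' θ)
    (hφ : ∀ θ, φ θ = ε₁ θ * V₁ θ + ε₂ θ * (V - V₁ θ) + σ * Γ θ)
    (κ₁ κ₂ l : ℝ)
    (hκ₁ : κ₁ = -θstar * ψ₁'') (hκ₂ : κ₂ = -θstar * ψ₂'')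
    (hl : l = θstar * (ψ₂' θstar - ψ₁' θstar))
    (hκ₁pos : 0 < κ₁) (hκ₂pos : 0 < κ₂)
    (hV₁pos : 0 < V₁ θstar) (hV₁lt : V₁ θstar < V)
    (K : ℝ) (hK : K = κ₁ * V₁ θstar + κ₂ * (V - V₁ θstar)) :
    deriv φ θstar ≤ 0 ↔
      σ * (n - 1 : ℝ) / (R θstar) ^ 2 - l ^ 2 * Γ θstar / (θstar * K) ≤ 0 :=
  stability_condition_iff_energy_derivative_nonpos_general n hn σ hσ m V θstar hθ ψ₁ ψ₂ ψ₁' ψ₂' U hU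
    hψ₁ hψ₂ ψ₁'' ψ₂'' hψ₁'' hψ₂'' hj ωn R V₁ Γ ε₁ ε₂ φ hR hV₁ hΓ hε₁ hε₂ hφ κ₁ κ₂ l hκ₁ hκ₂ hl
    hκ₁pos hκ₂pos hV₁pos hV₁lt K hK
end

section
/- Let H be a real Hilbert space, let S and K be bounded self-adjoint positive semidefinite linear operators on H, and suppose there is γ > 0 such that (Sg|g) ≥ γ‖Sg‖² for all g ∈ H. If v, f ∈ H satisfy v + K(Sv) = f, then ‖Sv‖ ≤ ‖f‖/γ. -/
open scoped RealInnerProductSpace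

/-- Abstract boundedness estimate for Neumann-to-Dirichlet operators: if `S` and `K` are
bounded self-adjoint positive semidefinite operators on a real Hilbert space, `S` satisfies
the coercivity `(Sg|g) ≥ γ‖Sg‖²`, and `v + K(Sv) = f`, then `‖Sv‖ ≤ ‖f‖/γ`. -/
theorem bounded_Sv_estimate
    {H : Type*} [NormedAddCommGroup H] [InnerProductSpace ℝ H]
    (S K : H →L[ℝ] H)
    (hSsa : ∀ f g : H, ⟪S f, g⟫ = ⟪f, S g⟫)
    (hSpsd : ∀ g : H, 0 ≤ ⟪S g, g⟫)
    (hKsa : ∀ f g : H, ⟪K f, g⟫ = ⟪f, K g⟫)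
    (hKpsd : ∀ g : H, 0 ≤ ⟪K g, g⟫)
    (γ : ℝ) (hγ : 0 < γ)
    (hcoerc : ∀ g : H, γ * ‖S g‖ ^ 2 ≤ ⟪S g, g⟫)
    (v f : H) (hvf : v + K (S v) = f) :
    ‖S v‖ ≤ ‖f‖ / γ := by
  have h1 : ⟪S v, v⟫ + ⟪S v, K (S v)⟫ = ⟪S v, f⟫ := by
    rw [← hvf, inner_add_right]
  have h2 : 0 ≤ ⟪S v, K (S v)⟫ := by
    rw [← hKsa]; exact hKpsd (S v)
  have h3 : γ * ‖S v‖ ^ 2 ≤ ⟪S v, f⟫ := by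
    calc γ * ‖S v‖ ^ 2 ≤ ⟪S v, v⟫ := hcoerc v
    _ ≤ ⟪S v, v⟫ + ⟪S v, K (S v)⟫ := by linarith
    _ = ⟪S v, f⟫ := h1
  have h4 : ⟪S v, f⟫ ≤ ‖S v‖ * ‖f‖ := real_inner_le_norm _ _
  rcases eq_or_lt_of_le (norm_nonneg (S v)) with h0 | h0
  · rw [← h0]; positivity
  · rw [le_div_iff₀ hγ]
    have : γ * ‖S v‖ ^ 2 ≤ ‖S v‖ * ‖f‖ := h3.trans h4
    nlinarith
end

section
/- Let H be a real Hilbert space, let N be a bounded self-adjoint positive semidefinite linear operator on H with (Nf|f) ≥ β‖Nf‖² for all f ∈ H and some β > 0, and let P be an orthogonal projection on H with Q := I − P. Then for every g ∈ H, (Ng|g) ≥ (1/2)·(NQg|Qg) + (NPg|Pg) − (2/β)·‖Pg‖². -/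
open scoped RealInnerProductSpace

/-- Cross-term absorption estimate: if `N` is a bounded self-adjoint positive semidefinite
operator with `(Nf|f) ≥ β‖Nf‖²` and `P` is an orthogonal projection with `Q = I − P`, then
`(Ng|g) ≥ (1/2)(NQg|Qg) + (NPg|Pg) − (2/β)‖Pg‖²` for every `g`. -/
theorem cross_term_absorption
    {H : Type*} [NormedAddCommGroup H] [InnerProductSpace ℝ H]
    (N P : H →L[ℝ] H)
    (hNsa : ∀ f g : H, ⟪N f, g⟫ = ⟪f, N g⟫)
    (hNpsd : ∀ g : H, 0 ≤ ⟪N g, g⟫)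
    (β : ℝ) (hβ : 0 < β)
    (hcoerc : ∀ f : H, β * ‖N f‖ ^ 2 ≤ ⟪N f, f⟫)
    (hPproj : ∀ g : H, P (P g) = P g)
    (hPsa : ∀ f g : H, ⟪P f, g⟫ = ⟪f, P g⟫) :
    ∀ g : H,
      (1 / 2) * ⟪N (g - P g), g - P g⟫ + ⟪N (P g), P g⟫ - (2 / β) * ‖P g‖ ^ 2
        ≤ ⟪N g, g⟫ := by
  intro g
  set p := P g with hp
  set q := g - p with hq
  have hg : g = q + p := by simp [hq]
  have expand : ⟪N g, g⟫ = ⟪N q, q⟫ + 2 * ⟪N q, p⟫ + ⟪N p, p⟫ := by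
    rw [hg]
    rw [map_add]
    rw [inner_add_left, inner_add_right, inner_add_right]
    have : ⟪N p, q⟫ = ⟪N q, p⟫ := by
      rw [hNsa p q, real_inner_comm, hNsa q p]
    rw [this]; ring
  have h1 : -(‖N q‖ * ‖p‖) ≤ ⟪N q, p⟫ := neg_abs_le _ |>.trans' (by
    have := abs_real_inner_le_norm (N q) p
    linarith [neg_abs_le (⟪N q, p⟫ : ℝ)])
  have h1' : -(‖N q‖ * ‖p‖) ≤ ⟪N q, p⟫ := by
    have := abs_real_inner_le_norm (N q) p
    linarith [neg_abs_le (⟪N q, p⟫ : ℝ), le_abs_self (⟪N q, p⟫ : ℝ)]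
  have h2 : 2 * (‖N q‖ * ‖p‖) ≤ (β / 2) * ‖N q‖ ^ 2 + (2 / β) * ‖p‖ ^ 2 := by
    rw [div_mul_eq_mul_div, div_mul_eq_mul_div,
      div_add_div _ _ (by norm_num : (2:ℝ) ≠ 0) hβ.ne', le_div_iff₀ (by positivity)]
    nlinarith [sq_nonneg (β * ‖N q‖ - 2 * ‖p‖)]
  have h3 : (β / 2) * ‖N q‖ ^ 2 ≤ (1 / 2) * ⟪N q, q⟫ := by
    have := hcoerc q; linarith
  rw [expand]
  nlinarith
end
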